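/- arXiv:1602.00304 — 5 statements merged into one kernel-verified Lean document; each statement's English description precedes it below -/
import Mathlib

section
/- Let n ≥ 1, d_i > 0, m_i > 0 (i = 1,…,n), θ ∈ ℝ, and let f_i : [0,∞)^n → ℝ be continuous. Assume there exist ū_i > 0 such that f_i(u) < 0 for every i whenever u ∈ R̄ = {u ∈ [0,∞)^n : Σ_{i=1}^n u_i/ū_i ≥ 1}. Suppose u_i ∈ C²(ℝ) with u_i ≥ 0 satisfy the differential inequalities d_i u_i'' + θ u_i' + u_i^{m_i} f_i(u_1,…,u_n) ≥ 0 on ℝ for i = 1,…,n, with (u_1,…,u_n)(x) → e_- as x → -∞ and (u_1,…,u_n)(x) → e_+ as x → +∞, where e_± are nonnegative equilibria (points at which u_i^{m_i} f_i(u) = 0 for all i). Then for any α_1,…,α_n > 0 and all x ∈ ℝ: Σ_{i=1}^n α_i u_i(x) ≤ max(α_1 ū_1,…,α_n ū_n) · (max(d_1,…,d_n)/min(d_1,…,d_n)). -/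
/-!
Let `G = ∑ αᵢ uᵢ` and suppose `G` exceeds `A · D⁺/D⁻`, where `A = max αᵢ ūᵢ`. The limits
`e_±` are equilibria, hence lie strictly inside `{∑ vᵢ/ūᵢ < 1}` (in `R̄` every `fᵢ` is
negative, which forces `e = 0`), so `G < A` near `±∞` and `G` attains its maximum at some `z`,
where `G' = 0`. Reflecting `x ↦ -x` if necessary we may take `θ ≥ 0`, and follow `G` to the
right of `z` up to the first point `b` where `G ≤ A`. On `(z, b)` we have `A < G ≤ A ∑ uᵢ/ūᵢ`,
so `u` stays in `R̄`, every reaction term is `≤ 0`, and each flux `dᵢ uᵢ' + θ uᵢ` is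
nondecreasing. Dividing by `dᵢ` and summing, `G' + θ ∑ αᵢ uᵢ/dᵢ` is nondecreasing on `[z, b]`,
which gives `G' ≥ θ (G(z)/D⁺ - G/D⁻)`. Hence `G` cannot drop below `ρ = (D⁻/D⁺) G(z) > A`
before `b`, contradicting `G(b) ≤ A`.
-/

open Filter Set Topology

theorem Continuous.exists_forall_ge_of_eventually_lt {g : ℝ → ℝ} {A x : ℝ} (hg : Continuous g)
    (hbot : ∀ᶠ y in atBot, g y < A) (htop : ∀ᶠ y in atTop, g y < A) (hx : A < g x) :
    ∃ z, ∀ y, g y ≤ g z :=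
  hg.exists_forall_ge' x <| by
    rw [cocompact_eq_atBot_atTop, eventually_sup]
    exact ⟨hbot.mono fun y hy => (hy.trans hx).le, htop.mono fun y hy => (hy.trans hx).le⟩

theorem exists_first_le_of_continuousOn {g : ℝ → ℝ} {a z R : ℝ} (hg : ContinuousOn g (Icc z R))
    (hzR : z ≤ R) (hR : g R ≤ a) : ∃ b ∈ Icc z R, g b ≤ a ∧ ∀ x ∈ Ico z b, a < g x := by
  set S := {x ∈ Icc z R | g x ≤ a}
  have hS : IsClosed S := hg.preimage_isClosed_of_isClosed isClosed_Icc isClosed_Iic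
  have hbdd : BddBelow S := ⟨z, fun x hx => hx.1.1⟩
  obtain ⟨hb, hgb⟩ := hS.csInf_mem ⟨R, ⟨hzR, le_rfl⟩, hR⟩ hbdd
  refine ⟨sInf S, hb, hgb, fun x hx => lt_of_not_ge fun hxa => ?_⟩
  exact hx.2.not_ge (csInf_le hbdd ⟨⟨hx.1, hx.2.le.trans hb.2⟩, hxa⟩)

theorem le_of_hasDerivAt_nonneg_below {g g' : ℝ → ℝ} {a b ρ : ℝ} (hab : a ≤ b)
    (hg : ContinuousOn g (Icc a b)) (hg' : ∀ x ∈ Ioo a b, HasDerivAt g (g' x) x)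
    (ha : ρ ≤ g a) (hbelow : ∀ x ∈ Ioo a b, g x < ρ → 0 ≤ g' x) : ρ ≤ g b := by
  set S := {x ∈ Icc a b | ρ ≤ g x}
  have hS : IsClosed S := hg.preimage_isClosed_of_isClosed isClosed_Icc isClosed_Ici
  have hbdd : BddAbove S := ⟨b, fun x hx => hx.1.2⟩
  obtain ⟨⟨hac, hcb⟩, hc⟩ := hS.csSup_mem ⟨a, ⟨le_rfl, hab⟩, ha⟩ hbdd
  have hlt : ∀ x ∈ Ioo (sSup S) b, g x < ρ := fun x hx => lt_of_not_ge fun hx' =>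
    hx.1.not_ge (le_csSup hbdd ⟨⟨hac.trans hx.1.le, hx.2.le⟩, hx'⟩)
  have hsub : Ioo (sSup S) b ⊆ Ioo a b := Ioo_subset_Ioo_left hac
  have hmono : MonotoneOn g (Icc (sSup S) b) := by
    refine monotoneOn_of_hasDerivWithinAt_nonneg (f' := g') (convex_Icc _ _)
      (hg.mono (Icc_subset_Icc_left hac)) (fun x hx => ?_) fun x hx => ?_ <;>
      rw [interior_Icc] at hx
    · exact (hg' x (hsub hx)).hasDerivWithinAt
    · exact hbelow x (hsub hx) (hlt x hx)
  exact hc.trans (hmono ⟨le_rfl, hcb⟩ ⟨hcb, le_rfl⟩ hcb)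

theorem monotoneOn_mul_deriv_add_mul {u : ℝ → ℝ} {d θ a b : ℝ} (hu : ContDiff ℝ 2 u)
    (h : ∀ x ∈ Ioo a b, 0 ≤ d * deriv (deriv u) x + θ * deriv u x) :
    MonotoneOn (fun x => d * deriv u x + θ * u x) (Icc a b) := by
  have hflux : ∀ x, HasDerivAt (fun x => d * deriv u x + θ * u x)
      (d * deriv (deriv u) x + θ * deriv u x) x := fun x =>
    ((hu.differentiable_deriv_two x).hasDerivAt.const_mul d).add
      ((hu.differentiable (by norm_num) x).hasDerivAt.const_mul θ)
  refine monotoneOn_of_hasDerivWithinAt_nonneg (convex_Icc a b)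
    (fun x _ => (hflux x).continuousAt.continuousWithinAt) (fun x _ => (hflux x).hasDerivWithinAt)
    fun x hx => ?_
  rw [interior_Icc] at hx
  exact h x hx

section

variable {ι : Type*}

def IsLowerSolution (d m : ι → ℝ) (θ : ℝ) (f : ι → (ι → ℝ) → ℝ) (u : ι → ℝ → ℝ) : Prop :=
  ∀ i x, 0 ≤ d i * deriv (deriv (u i)) x + θ * deriv (u i) x + u i x ^ m i * f i (fun j => u j x)

variable {d m : ι → ℝ} {θ : ℝ} {f : ι → (ι → ℝ) → ℝ} {u : ι → ℝ → ℝ} {ubar α : ι → ℝ}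

theorem IsLowerSolution.comp_neg (hsol : IsLowerSolution d m θ f u) :
    IsLowerSolution d m (-θ) f (fun i x => u i (-x)) := by
  intro i x
  have h₁ : deriv (fun y => u i (-y)) = fun y => -deriv (u i) (-y) :=
    funext fun y => deriv_comp_neg (u i) y
  have h₂ : deriv (deriv fun y => u i (-y)) x = deriv (deriv (u i)) (-x) := by
    rw [h₁, deriv.fun_neg, deriv_comp_neg, neg_neg]
  rw [h₂, h₁]
  convert hsol i (-x) using 2
  ring

variable [Fintype ι]

theorem sum_div_le_sum_div_of_le {c w : ι → ℝ} {D : ℝ} (hc : ∀ i, 0 ≤ c i) (hw : ∀ i, 0 < w i)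
    (hD : ∀ i, w i ≤ D) : (∑ i, c i) / D ≤ ∑ i, c i / w i := by
  rw [Finset.sum_div]
  exact Finset.sum_le_sum fun i _ => div_le_div_of_nonneg_left (hc i) (hw i) (hD i)

theorem sum_div_le_sum_div_of_ge {c w : ι → ℝ} {D : ℝ} (hc : ∀ i, 0 ≤ c i) (hD₀ : 0 < D)
    (hD : ∀ i, D ≤ w i) : ∑ i, c i / w i ≤ (∑ i, c i) / D := by
  rw [Finset.sum_div]
  exact Finset.sum_le_sum fun i _ => div_le_div_of_nonneg_left (hc i) hD₀ (hD i)

theorem sum_mul_le_mul_sum_div {v : ι → ℝ} {A : ℝ} (hubar : ∀ i, 0 < ubar i)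
    (hA : ∀ i, α i * ubar i ≤ A) (hv : ∀ i, 0 ≤ v i) :
    ∑ i, α i * v i ≤ A * ∑ i, v i / ubar i := by
  rw [Finset.mul_sum]
  refine Finset.sum_le_sum fun i _ => ?_
  calc α i * v i = α i * ubar i * (v i / ubar i) := by field_simp [(hubar i).ne']
    _ ≤ A * (v i / ubar i) := mul_le_mul_of_nonneg_right (hA i) (div_nonneg (hv i) (hubar i).le)

theorem sum_div_lt_one_of_equilibrium {e : ι → ℝ}
    (hRbar : ∀ v : ι → ℝ, (∀ j, 0 ≤ v j) → 1 ≤ ∑ i, v i / ubar i → ∀ i, f i v < 0)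
    (he : ∀ i, 0 ≤ e i) (heq : ∀ i, e i ^ m i * f i e = 0) : ∑ i, e i / ubar i < 1 := by
  by_contra! h
  have he0 : ∀ i, e i = 0 := fun i =>
    ((Real.rpow_eq_zero_iff_of_nonneg (he i)).1
      ((mul_eq_zero.1 (heq i)).resolve_right (hRbar e he h i).ne)).1
  norm_num [he0] at h

theorem IsLowerSolution.sum_deriv_add_le (hsol : IsLowerSolution d m θ f u)
    (hu2 : ∀ i, ContDiff ℝ 2 (u i)) (hunn : ∀ i x, 0 ≤ u i x)
    (hRbar : ∀ v : ι → ℝ, (∀ j, 0 ≤ v j) → 1 ≤ ∑ i, v i / ubar i → ∀ i, f i v < 0)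
    (hd : ∀ i, 0 < d i) (hα : ∀ i, 0 ≤ α i) {a b x : ℝ}
    (hR : ∀ y ∈ Ioo a b, 1 ≤ ∑ i, u i y / ubar i) (hx : x ∈ Icc a b) :
    ∑ i, α i * deriv (u i) a + θ * ∑ i, α i * u i a / d i ≤
      ∑ i, α i * deriv (u i) x + θ * ∑ i, α i * u i x / d i := by
  have hflux : ∀ i, d i * deriv (u i) a + θ * u i a ≤ d i * deriv (u i) x + θ * u i x := by
    refine fun i => monotoneOn_mul_deriv_add_mul (hu2 i) (fun y hy => ?_)
      (left_mem_Icc.2 (hx.1.trans hx.2)) hx hx.1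
    have hreact : u i y ^ m i * f i (fun j => u j y) ≤ 0 :=
      mul_nonpos_of_nonneg_of_nonpos (Real.rpow_nonneg (hunn i y) _)
        (hRbar _ (fun j => hunn j y) (hR y hy) i).le
    linarith [hsol i y]
  have hsplit : ∀ y, ∑ i, α i * deriv (u i) y + θ * ∑ i, α i * u i y / d i =
      ∑ i, α i / d i * (d i * deriv (u i) y + θ * u i y) := by
    intro y
    rw [Finset.mul_sum, ← Finset.sum_add_distrib]
    refine Finset.sum_congr rfl fun i _ => ?_
    field_simp [(hd i).ne']
  rw [hsplit, hsplit]
  exact Finset.sum_le_sum fun i _ =>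
    mul_le_mul_of_nonneg_left (hflux i) (div_nonneg (hα i) (hd i).le)

theorem IsLowerSolution.sum_mul_le_of_nonneg [Nonempty ι] (hsol : IsLowerSolution d m θ f u)
    (hθ : 0 ≤ θ) (hu2 : ∀ i, ContDiff ℝ 2 (u i)) (hunn : ∀ i x, 0 ≤ u i x)
    (hubar : ∀ i, 0 < ubar i)
    (hRbar : ∀ v : ι → ℝ, (∀ j, 0 ≤ v j) → 1 ≤ ∑ i, v i / ubar i → ∀ i, f i v < 0)
    (hα : ∀ i, 0 ≤ α i) {A Dm Dp : ℝ} (hA : ∀ i, α i * ubar i ≤ A) (hDm : 0 < Dm)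
    (hDm_le : ∀ i, Dm ≤ d i) (hle_Dp : ∀ i, d i ≤ Dp)
    (hbot : ∀ᶠ x in atBot, ∑ i, α i * u i x < A) (htop : ∀ᶠ x in atTop, ∑ i, α i * u i x < A)
    (x : ℝ) : ∑ i, α i * u i x ≤ A * (Dp / Dm) := by
  set G : ℝ → ℝ := fun y => ∑ i, α i * u i y
  set G' : ℝ → ℝ := fun y => ∑ i, α i * deriv (u i) y
  set H : ℝ → ℝ := fun y => ∑ i, α i * u i y / d i
  obtain ⟨i₀⟩ := ‹Nonempty ι›
  have hd : ∀ i, 0 < d i := fun i => hDm.trans_le (hDm_le i)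
  have hDp : 0 < Dp := (hd i₀).trans_le (hle_Dp i₀)
  have hA₀ : 0 ≤ A := (mul_nonneg (hα i₀) (hubar i₀).le).trans (hA i₀)
  have hαu : ∀ y i, 0 ≤ α i * u i y := fun y i => mul_nonneg (hα i) (hunn i y)
  have hG : ∀ y, HasDerivAt G (G' y) y := fun y => HasDerivAt.fun_sum fun i _ =>
    ((hu2 i).differentiable (by norm_num) y).hasDerivAt.const_mul (α i)
  have hGc : Continuous G := continuous_iff_continuousAt.2 fun y => (hG y).continuousAt
  by_contra! hx
  have hAx : A < G x := (le_mul_of_one_le_right hA₀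
    ((one_le_div hDm).2 ((hDm_le i₀).trans (hle_Dp i₀)))).trans_lt hx
  obtain ⟨z, hz⟩ := hGc.exists_forall_ge_of_eventually_lt hbot htop hAx
  have hG'z : G' z = 0 := IsLocalMax.hasDerivAt_eq_zero (Eventually.of_forall hz) (hG z)
  obtain ⟨R, hRA, hzR⟩ := (htop.and (eventually_ge_atTop z)).exists
  obtain ⟨b, hb, hGb, hGgt⟩ := exists_first_le_of_continuousOn hGc.continuousOn hzR hRA.le
  have hR : ∀ y ∈ Ioo z b, 1 ≤ ∑ i, u i y / ubar i := fun y hy => by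
    have := (hGgt y (Ioo_subset_Ico_self hy)).trans_le
      (sum_mul_le_mul_sum_div hubar hA fun i => hunn i y)
    nlinarith
  set ρ := Dm / Dp * G z
  have hρ : A < ρ := calc
    A = Dm / Dp * (A * (Dp / Dm)) := by field_simp
    _ < ρ := mul_lt_mul_of_pos_left (hx.trans_le (hz x)) (div_pos hDm hDp)
  have hρz : ρ ≤ G z := mul_le_of_le_one_left (hA₀.trans (hAx.trans_le (hz x)).le)
    ((div_le_one hDp).2 ((hDm_le i₀).trans (hle_Dp i₀)))
  suffices ρ ≤ G b by linarith
  refine le_of_hasDerivAt_nonneg_below hb.1 hGc.continuousOn (fun y _ => hG y) hρz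
    fun y hy hyρ => ?_
  have hflux : G' z + θ * H z ≤ G' y + θ * H y :=
    hsol.sum_deriv_add_le hu2 hunn hRbar hd hα hR (Ioo_subset_Icc_self hy)
  have hH : H y ≤ H z := calc
    H y ≤ G y / Dm := sum_div_le_sum_div_of_ge (hαu y) hDm hDm_le
    _ ≤ ρ / Dm := div_le_div_of_nonneg_right hyρ.le hDm.le
    _ = G z / Dp := by simp only [ρ]; field_simp
    _ ≤ H z := sum_div_le_sum_div_of_le (hαu z) hd hle_Dp
  linarith [mul_nonneg hθ (sub_nonneg.2 hH)]

theorem IsLowerSolution.sum_mul_le [Nonempty ι] (hsol : IsLowerSolution d m θ f u)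
    (hu2 : ∀ i, ContDiff ℝ 2 (u i)) (hunn : ∀ i x, 0 ≤ u i x) (hubar : ∀ i, 0 < ubar i)
    (hRbar : ∀ v : ι → ℝ, (∀ j, 0 ≤ v j) → 1 ≤ ∑ i, v i / ubar i → ∀ i, f i v < 0)
    (hα : ∀ i, 0 ≤ α i) {A Dm Dp : ℝ} (hA : ∀ i, α i * ubar i ≤ A) (hDm : 0 < Dm)
    (hDm_le : ∀ i, Dm ≤ d i) (hle_Dp : ∀ i, d i ≤ Dp)
    (hbot : ∀ᶠ x in atBot, ∑ i, α i * u i x < A) (htop : ∀ᶠ x in atTop, ∑ i, α i * u i x < A)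
    (x : ℝ) : ∑ i, α i * u i x ≤ A * (Dp / Dm) := by
  rcases le_or_gt 0 θ with hθ | hθ
  · exact hsol.sum_mul_le_of_nonneg hθ hu2 hunn hubar hRbar hα hA hDm hDm_le hle_Dp hbot htop x
  · simpa using hsol.comp_neg.sum_mul_le_of_nonneg (neg_nonneg.2 hθ.le)
      (fun i => (hu2 i).comp contDiff_neg) (fun i y => hunn i (-y)) hubar hRbar hα hA hDm
      hDm_le hle_Dp (tendsto_neg_atBot_atTop.eventually htop)
      (tendsto_neg_atTop_atBot.eventually hbot) (-x)

end

theorem nbmp_upper_bound_general (n : ℕ) (d m : Fin (n + 1) → ℝ) (θ : ℝ)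
    (f : Fin (n + 1) → (Fin (n + 1) → ℝ) → ℝ)
    (hd : ∀ i, 0 < d i)
    (ubar : Fin (n + 1) → ℝ) (hubar : ∀ i, 0 < ubar i)
    (hRbar : ∀ v : Fin (n + 1) → ℝ, (∀ j, 0 ≤ v j) →
      1 ≤ (∑ i, v i / ubar i) → ∀ i, f i v < 0)
    (u : Fin (n + 1) → ℝ → ℝ)
    (hu2 : ∀ i, ContDiff ℝ 2 (u i))
    (hunn : ∀ i x, 0 ≤ u i x)
    (hineq : ∀ i x, 0 ≤ d i * deriv (deriv (u i)) x + θ * deriv (u i) x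
        + (u i x) ^ (m i) * f i (fun j => u j x))
    (em ep : Fin (n + 1) → ℝ)
    (hemnn : ∀ i, 0 ≤ em i) (hepnn : ∀ i, 0 ≤ ep i)
    (heqm : ∀ i, (em i) ^ (m i) * f i em = 0)
    (heqp : ∀ i, (ep i) ^ (m i) * f i ep = 0)
    (hlimm : ∀ i, Tendsto (u i) atBot (nhds (em i)))
    (hlimp : ∀ i, Tendsto (u i) atTop (nhds (ep i)))
    (α : Fin (n + 1) → ℝ) (hα : ∀ i, 0 < α i) :
    ∀ x : ℝ,
      ∑ i, α i * u i x ≤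
        (Finset.univ.sup' Finset.univ_nonempty (fun i => α i * ubar i))
          * ((Finset.univ.sup' Finset.univ_nonempty d)
            / (Finset.univ.inf' Finset.univ_nonempty d)) := by
  set A := Finset.univ.sup' Finset.univ_nonempty (fun i => α i * ubar i)
  have hA : ∀ i, α i * ubar i ≤ A := fun i =>
    Finset.le_sup' (fun i => α i * ubar i) (Finset.mem_univ i)
  have hA₀ : 0 < A := (mul_pos (hα 0) (hubar 0)).trans_le (hA 0)
  have hends : ∀ {l : Filter ℝ} {e : Fin (n + 1) → ℝ}, (∀ i, 0 ≤ e i) →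
      (∀ i, e i ^ m i * f i e = 0) → (∀ i, Tendsto (u i) l (𝓝 (e i))) →
      ∀ᶠ y in l, ∑ i, α i * u i y < A := fun he heq hlim =>
    (tendsto_finsetSum _ fun i _ => (hlim i).const_mul (α i)).eventually_lt_const <|
      (sum_mul_le_mul_sum_div hubar hA he).trans_lt <| by
        simpa using mul_lt_mul_of_pos_left (sum_div_lt_one_of_equilibrium hRbar he heq) hA₀
  exact IsLowerSolution.sum_mul_le hineq hu2 hunn hubar hRbar (fun i => (hα i).le) hA
    ((Finset.lt_inf'_iff _).2 fun i _ => hd i) (fun i => Finset.inf'_le d (Finset.mem_univ i))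
    (fun i => Finset.le_sup' d (Finset.mem_univ i)) (hends hemnn heqm hlimm)
    (hends hepnn heqp hlimp)

/-- Upper bound in the NBMP for lower solutions of the `n`-species system. -/
theorem nbmp_upper_bound (n : ℕ) (d m : Fin (n + 1) → ℝ) (θ : ℝ)
    (f : Fin (n + 1) → (Fin (n + 1) → ℝ) → ℝ)
    (hd : ∀ i, 0 < d i) (hm : ∀ i, 0 < m i)
    (hf : ∀ i, ContinuousOn (f i) {v | ∀ j, 0 ≤ v j})
    (ubar : Fin (n + 1) → ℝ) (hubar : ∀ i, 0 < ubar i)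
    (hRbar : ∀ v : Fin (n + 1) → ℝ, (∀ j, 0 ≤ v j) →
      1 ≤ (∑ i, v i / ubar i) → ∀ i, f i v < 0)
    (u : Fin (n + 1) → ℝ → ℝ)
    (hu2 : ∀ i, ContDiff ℝ 2 (u i))
    (hunn : ∀ i x, 0 ≤ u i x)
    (hineq : ∀ i x, 0 ≤ d i * deriv (deriv (u i)) x + θ * deriv (u i) x
        + (u i x) ^ (m i) * f i (fun j => u j x))
    (em ep : Fin (n + 1) → ℝ)
    (hemnn : ∀ i, 0 ≤ em i) (hepnn : ∀ i, 0 ≤ ep i)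
    (heqm : ∀ i, (em i) ^ (m i) * f i em = 0)
    (heqp : ∀ i, (ep i) ^ (m i) * f i ep = 0)
    (hlimm : ∀ i, Tendsto (u i) atBot (nhds (em i)))
    (hlimp : ∀ i, Tendsto (u i) atTop (nhds (ep i)))
    (α : Fin (n + 1) → ℝ) (hα : ∀ i, 0 < α i) :
    ∀ x : ℝ,
      ∑ i, α i * u i x ≤
        (Finset.univ.sup' Finset.univ_nonempty (fun i => α i * ubar i))
          * ((Finset.univ.sup' Finset.univ_nonempty d)
            / (Finset.univ.inf' Finset.univ_nonempty d)) :=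
  nbmp_upper_bound_general n d m θ f hd ubar hubar hRbar u hu2 hunn hineq em ep hemnn hepnn heqm
    heqp hlimm hlimp α hα
end

section
/- Let d_i, σ_i, c_{ij} > 0 (i,j = 1,2,3,4) and θ ∈ ℝ. Set σ̃_i = σ_i − c_{i4} σ_4 / c_{44} for i = 1,2,3 and α*_i = c_{4i} for i = 1,2,3. Assume: [H1] σ̃_i > 0 for i = 1,2,3; [H2] min_{i=1,2,3}(α*_i · min_{j=1,2,3} σ̃_j/c_{ji}) · (min_{i=1,…,4} d_i)/(max_{i=1,…,4} d_i) ≥ σ_4. Then there is no positive C² solution (u_1, u_2, u_3, u_4) on ℝ (all components strictly positive) of the system d_i u_i'' + θ u_i' + u_i(σ_i − c_{i1}u_1 − c_{i2}u_2 − c_{i3}u_3 − c_{i4}u_4) = 0 (i = 1,…,4) satisfying (u_1,u_2,u_3,u_4)(x) → (σ_1/c_{11}, 0, 0, 0) as x → -∞ and (u_1,u_2,u_3,u_4)(x) → (0, σ_2/c_{22}, 0, 0) as x → +∞. -/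
/-!
Reflecting `x ↦ -x` reverses the speed and swaps the two limiting states, so we may assume
`θ ≥ 0`. The invader `u₄` attains its maximum at some `m`, where the equation gives
`∑ⱼ c₄ⱼ uⱼ(m) ≤ σ₄`; in particular `c₄₄ u₄ ≤ σ₄` everywhere. Wherever the weighted resident
density `q = ∑_{i ≤ 3} c₄ᵢ uᵢ` lies below the threshold `μ` of [H2], every resident therefore
has a positive per-capita growth rate and is a strict supersolution of `dᵢ w'' + θ w' = 0`.
On an interval `[A, B]` where `q < c < μ` inside and `q ≥ c` at both ends, comparison with the
exponential solutions of these equations gives `q ≥ (min d / max d) · c`; how these solutions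
depend on `dᵢ ∈ [min d, max d]` is controlled by the convexity of `t ↦ t ^ κ`. Hence
`q ≥ (min d / max d) · μ ≥ σ₄` everywhere, contradicting `q(m) + c₄₄ u₄(m) ≤ σ₄`.
-/

open Filter Real Set Topology

noncomputable section

def driftDiffusion (d θ : ℝ) (f : ℝ → ℝ) (x : ℝ) : ℝ :=
  d * deriv (deriv f) x + θ * deriv f x

theorem IsLocalMin.deriv_deriv_nonneg {f : ℝ → ℝ} {x : ℝ} (h : IsLocalMin f x)
    (hf : ContinuousAt f x) : 0 ≤ deriv (deriv f) x := by
  by_contra! hneg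
  -- otherwise `x` is also a local maximum, so `f` is locally constant
  have hconst : f =ᶠ[𝓝 x] fun _ => f x :=
    (h.and (isLocalMax_of_deriv_deriv_neg hneg h.deriv_eq_zero hf)).mono
      fun y hy => le_antisymm hy.2 hy.1
  have : deriv (deriv f) x = 0 := by simp [hconst.deriv.deriv_eq]
  linarith

theorem IsLocalMax.deriv_deriv_nonpos {f : ℝ → ℝ} {x : ℝ} (h : IsLocalMax f x)
    (hf : ContinuousAt f x) : deriv (deriv f) x ≤ 0 := by
  simpa using h.neg.deriv_deriv_nonneg hf.neg

theorem ContDiff.driftDiffusion_sub {f g : ℝ → ℝ} (hf : ContDiff ℝ 2 f)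
    (hg : ContDiff ℝ 2 g) (d θ x : ℝ) :
    driftDiffusion d θ (f - g) x = driftDiffusion d θ f x - driftDiffusion d θ g x := by
  have hfg : deriv (f - g) = deriv f - deriv g :=
    funext fun y =>
      deriv_sub (hf.differentiable two_ne_zero y) (hg.differentiable two_ne_zero y)
  rw [driftDiffusion, driftDiffusion, driftDiffusion, hfg,
    deriv_sub (hf.differentiable_deriv_two x) (hg.differentiable_deriv_two x)]
  simp only [Pi.sub_apply]
  ring

theorem driftDiffusion_const_add_mul (d θ α β : ℝ) (f : ℝ → ℝ) (x : ℝ) :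
    driftDiffusion d θ (fun y => α + β * f y) x = β * driftDiffusion d θ f x := by
  simp only [driftDiffusion, deriv_const_add', deriv_const_mul_field']
  ring

theorem driftDiffusion_comp_neg (d θ : ℝ) (f : ℝ → ℝ) (x : ℝ) :
    driftDiffusion d (-θ) (fun y => f (-y)) x = driftDiffusion d θ f (-x) := by
  have h : deriv (fun y => f (-y)) = fun y => -deriv f (-y) := funext (deriv_comp_neg f)
  rw [driftDiffusion, driftDiffusion, h, deriv.fun_neg, deriv_comp_neg]
  ring

theorem nonneg_of_driftDiffusion_neg {d θ A B : ℝ} {w : ℝ → ℝ} (hd : 0 ≤ d) (hAB : A ≤ B)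
    (hw : ContinuousOn w (Icc A B)) (hA : 0 ≤ w A) (hB : 0 ≤ w B)
    (hL : ∀ x ∈ Ioo A B, driftDiffusion d θ w x < 0) : ∀ x ∈ Icc A B, 0 ≤ w x := by
  obtain ⟨m, hm, hmin⟩ := isCompact_Icc.exists_isMinOn (nonempty_Icc.2 hAB) hw
  suffices 0 ≤ w m from fun x hx => this.trans (hmin hx)
  by_contra! hneg
  have hmA : A < m := hm.1.lt_of_ne (by rintro rfl; linarith)
  have hmB : m < B := hm.2.lt_of_ne (by rintro rfl; linarith)
  have hnhds : Icc A B ∈ 𝓝 m := Icc_mem_nhds hmA hmB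
  have hloc : IsLocalMin w m := hmin.isLocalMin hnhds
  have hLm := hL m ⟨hmA, hmB⟩
  rw [driftDiffusion, hloc.deriv_eq_zero] at hLm
  nlinarith [hloc.deriv_deriv_nonneg (hw.continuousAt hnhds)]

theorem interpolation_le_of_driftDiffusion_neg {d θ A B : ℝ} {f P : ℝ → ℝ} (hd : 0 ≤ d)
    (hAB : A ≤ B) (hf : ContDiff ℝ 2 f) (hP : ContDiff ℝ 2 P) (hPA : P A = 1) (hPB : P B = 0)
    (hLP : ∀ x ∈ Ioo A B, driftDiffusion d θ P x = 0)
    (hLf : ∀ x ∈ Ioo A B, driftDiffusion d θ f x < 0) :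
    ∀ z ∈ Icc A B, f A * P z + f B * (1 - P z) ≤ f z := by
  set h : ℝ → ℝ := fun x => f B + (f A - f B) * P x
  have hh : ContDiff ℝ 2 h := contDiff_const.add (contDiff_const.mul hP)
  have hfh := nonneg_of_driftDiffusion_neg (w := f - h) hd hAB
    (hf.sub hh).continuous.continuousOn (by simp [h, hPA]) (by simp [h, hPB]) fun x hx => by
      rw [hf.driftDiffusion_sub hh, driftDiffusion_const_add_mul, hLP x hx]
      simpa using hLf x hx
  intro z hz
  have := hfh z hz
  simp only [Pi.sub_apply, h] at this
  linarith

theorem rpow_secant_le {S u κ : ℝ} (hS : 0 ≤ S) (hS1 : S < 1) (hSu : S ≤ u) (hu : u ≤ 1)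
    (hκ : 1 ≤ κ) : (u ^ κ - S ^ κ) / (1 - S ^ κ) ≤ (u - S) / (1 - S) := by
  have hSκ : 0 < 1 - S ^ κ := sub_pos.2 (rpow_lt_one hS hS1 (by linarith))
  rcases hSu.eq_or_lt with rfl | hSu
  · simp
  have hslope := (convexOn_rpow hκ).secant_mono (a := S) (x := u) (y := 1) hS
    (hS.trans hSu.le) (mem_Ici.2 zero_le_one) hSu.ne' hS1.ne' hu
  rw [one_rpow] at hslope
  rw [div_le_div_iff₀ hSκ (by linarith)]
  rw [div_le_div_iff₀ (by linarith) (by linarith)] at hslope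
  linarith

theorem sub_rpow_secant_le {S u κ : ℝ} (hS : 0 ≤ S) (hS1 : S < 1) (hSu : S ≤ u) (hu : u ≤ 1)
    (hκ : 1 ≤ κ) : (u - S) / (1 - S) - (u ^ κ - S ^ κ) / (1 - S ^ κ) ≤ 1 - 1 / κ := by
  have hSκ : S ^ κ ≤ S := rpow_le_self_of_le_one hS hS1.le hκ
  have huκ : S ^ κ ≤ u ^ κ := rpow_le_rpow hS hSu (by linarith)
  have hbernoulli : 1 - u ^ κ ≤ κ * (1 - u) := by
    have := one_add_mul_self_le_rpow_one_add (s := u - 1) (by linarith) hκ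
    rw [add_sub_cancel] at this
    linarith
  have hS' : 0 < 1 - S := by linarith
  have hSκ' : 0 < 1 - S ^ κ := by linarith
  have hdecomp : (u - S) / (1 - S) - (u ^ κ - S ^ κ) / (1 - S ^ κ)
      = (1 - u ^ κ) / (1 - S ^ κ) - (1 - u) / (1 - S) := by
    field_simp
    ring
  rw [hdecomp]
  set w := (1 - u) / (1 - S)
  -- `(1 - u ^ κ) / (1 - S ^ κ)` is at most `1`, and at most `κ * w` by Bernoulli's inequality
  rcases le_total (1 / κ) w with hw | hw
  · have : (1 - u ^ κ) / (1 - S ^ κ) ≤ 1 := (div_le_one hSκ').2 (by linarith)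
    linarith
  · have hκw : (1 - u ^ κ) / (1 - S ^ κ) ≤ κ * w := by
      rw [div_le_iff₀ hSκ']
      calc 1 - u ^ κ ≤ κ * (1 - u) := hbernoulli
        _ = κ * w * (1 - S) := by simp only [w]; field_simp
        _ ≤ κ * w * (1 - S ^ κ) := by gcongr
    have : (κ - 1) * w ≤ (κ - 1) * (1 / κ) := mul_le_mul_of_nonneg_left hw (by linarith)
    have hκ1 : (κ - 1) * (1 / κ) = 1 - 1 / κ := by field_simp
    linarith

def expProfile (k A B x : ℝ) : ℝ :=
  (exp (-k * (x - A)) - exp (-k * (B - A))) / (1 - exp (-k * (B - A)))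

theorem expProfile_left {k A B : ℝ} (hk : 0 < k) (hAB : A < B) : expProfile k A B A = 1 := by
  have : exp (-k * (B - A)) < 1 := exp_lt_one_iff.2 (by nlinarith)
  rw [expProfile, sub_self, mul_zero, exp_zero, div_self (sub_pos.2 this).ne']

theorem expProfile_right (k A B : ℝ) : expProfile k A B B = 0 := by
  simp [expProfile]

theorem contDiff_expProfile (k A B : ℝ) : ContDiff ℝ 2 (expProfile k A B) := by
  unfold expProfile
  fun_prop

theorem driftDiffusion_expProfile {d θ : ℝ} (hd : d ≠ 0) (A B x : ℝ) :
    driftDiffusion d θ (expProfile (θ / d) A B) x = 0 := by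
  set k := θ / d
  set E := exp (-k * (B - A))
  have hform :
      expProfile k A B = fun y => -E / (1 - E) + 1 / (1 - E) * exp (-k * (y - A)) := by
    funext y
    rw [expProfile]
    ring
  have hderiv : deriv (fun y => exp (-k * (y - A))) = fun y => -k * exp (-k * (y - A)) := by
    funext y
    have := ((hasDerivAt_id y).sub_const A).const_mul (-k) |>.exp
    simpa [mul_comm] using this.deriv
  rw [hform, driftDiffusion_const_add_mul, driftDiffusion, hderiv, deriv_const_mul_field',
    hderiv]
  simp only [k]
  field_simp
  ring

theorem exp_neg_mul_sub_bounds {k A B x : ℝ} (hk : 0 < k) (hAB : A < B) (hx : x ∈ Icc A B) :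
    0 ≤ exp (-k * (B - A)) ∧ exp (-k * (B - A)) < 1 ∧
      exp (-k * (B - A)) ≤ exp (-k * (x - A)) ∧ exp (-k * (x - A)) ≤ 1 :=
  ⟨(exp_pos _).le, exp_lt_one_iff.2 (by nlinarith), exp_le_exp.2 (by nlinarith [hx.2]),
    exp_le_one_iff.2 (by nlinarith [hx.1])⟩

theorem expProfile_mem_Icc {k A B x : ℝ} (hk : 0 < k) (hAB : A < B) (hx : x ∈ Icc A B) :
    expProfile k A B x ∈ Icc 0 1 := by
  obtain ⟨-, hS1, hSu, hu1⟩ := exp_neg_mul_sub_bounds hk hAB hx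
  exact ⟨div_nonneg (by linarith) (by linarith), (div_le_one (by linarith)).2 (by linarith)⟩

theorem expProfile_eq_rpow {k' : ℝ} (hk' : k' ≠ 0) (k A B x : ℝ) :
    expProfile k A B x = (exp (-k' * (x - A)) ^ (k / k') - exp (-k' * (B - A)) ^ (k / k')) /
      (1 - exp (-k' * (B - A)) ^ (k / k')) := by
  simp only [expProfile, ← exp_mul]
  congr 3 <;> field_simp

theorem expProfile_le_expProfile {k k' A B x : ℝ} (hk' : 0 < k') (hk : k' ≤ k) (hAB : A < B)
    (hx : x ∈ Icc A B) : expProfile k A B x ≤ expProfile k' A B x := by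
  obtain ⟨hS, hS1, hSu, hu1⟩ := exp_neg_mul_sub_bounds hk' hAB hx
  rw [expProfile_eq_rpow hk'.ne' k]
  exact rpow_secant_le hS hS1 hSu hu1 ((one_le_div hk').2 hk)

theorem expProfile_sub_expProfile_le {k k' A B x : ℝ} (hk' : 0 < k') (hk : k' ≤ k)
    (hAB : A < B) (hx : x ∈ Icc A B) : expProfile k' A B x - expProfile k A B x ≤ 1 - k' / k := by
  obtain ⟨hS, hS1, hSu, hu1⟩ := exp_neg_mul_sub_bounds hk' hAB hx
  rw [expProfile_eq_rpow hk'.ne' k, ← one_div_div k k']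
  exact sub_rpow_secant_le hS hS1 hSu hu1 ((one_le_div hk').2 hk)

theorem exists_weights_le_of_driftDiffusion_neg {θ a b A B z : ℝ} (hθ : 0 ≤ θ) (ha : 0 < a)
    (hab : a ≤ b) (hAB : A < B) (hz : z ∈ Icc A B) :
    ∃ p r : ℝ, 0 ≤ p ∧ 0 ≤ r ∧ a / b ≤ p + r ∧
      ∀ (d : ℝ) (f : ℝ → ℝ), a ≤ d → d ≤ b → ContDiff ℝ 2 f → 0 ≤ f A → 0 ≤ f B →
        (∀ x ∈ Ioo A B, driftDiffusion d θ f x < 0) → p * f A + r * f B ≤ f z := by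
  have hb : 0 < b := ha.trans_le hab
  rcases hθ.eq_or_lt with rfl | hθ
  · set P : ℝ → ℝ := fun y => 1 + -(B - A)⁻¹ * (y - A)
    have hPA : P A = 1 := by simp [P]
    have hPB : P B = 0 := by simp only [P]; field_simp [(sub_pos.2 hAB).ne']; ring
    have hzB : (B - A)⁻¹ * (z - A) ≤ 1 := by
      rw [inv_mul_le_iff₀ (sub_pos.2 hAB)]; linarith [hz.2]
    have hzA : 0 ≤ (B - A)⁻¹ * (z - A) :=
      mul_nonneg (inv_nonneg.2 (sub_pos.2 hAB).le) (sub_nonneg.2 hz.1)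
    refine ⟨P z, 1 - P z, by simp only [P]; linarith, by simp only [P]; linarith,
      by rw [add_sub_cancel]; exact (div_le_one hb).2 hab, fun d f had _ hf _ _ hLf => ?_⟩
    have hLP (x : ℝ) : driftDiffusion d 0 P x = 0 := by
      rw [driftDiffusion_const_add_mul]
      simp [driftDiffusion]
    have := interpolation_le_of_driftDiffusion_neg (ha.le.trans had) hAB.le hf (by fun_prop)
      hPA hPB (fun x _ => hLP x) hLf z hz
    linarith
  · have hprofile {k : ℝ} (hk : 0 < k) := expProfile_mem_Icc hk hAB hz
    refine ⟨expProfile (θ / a) A B z, 1 - expProfile (θ / b) A B z,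
      (hprofile (by positivity)).1, sub_nonneg.2 (hprofile (by positivity)).2, ?_,
      fun d f had hdb hf hfA hfB hLf => ?_⟩
    · have := expProfile_sub_expProfile_le (by positivity)
        (div_le_div_of_nonneg_left hθ.le ha hab) hAB hz
      rw [div_div_div_cancel_left' _ _ hθ.ne'] at this
      linarith
    · have hd : 0 < d := ha.trans_le had
      have hint := interpolation_le_of_driftDiffusion_neg hd.le hAB.le hf
        (contDiff_expProfile _ A B) (expProfile_left (by positivity) hAB) (expProfile_right _ A B)
        (fun x _ => driftDiffusion_expProfile hd.ne' A B x) hLf z hz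
      have had' := expProfile_le_expProfile (by positivity)
        (div_le_div_of_nonneg_left hθ.le ha had) hAB hz
      have hdb' := expProfile_le_expProfile (by positivity)
        (div_le_div_of_nonneg_left hθ.le hd hdb) hAB hz
      nlinarith [mul_le_mul_of_nonneg_left had' hfA, mul_le_mul_of_nonneg_left hdb' hfB]

theorem exists_lt_forall_Ioc_lt {q : ℝ → ℝ} (hq : Continuous q) {c z : ℝ} (hz : q z < c)
    (hbot : ∀ᶠ x in atBot, c ≤ q x) : ∃ A < z, c ≤ q A ∧ ∀ x ∈ Ioc A z, q x < c := by
  set S := Iic z ∩ q ⁻¹' Ici c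
  have hne : S.Nonempty :=
    (hbot.and (eventually_le_atBot z)).exists.imp fun _ hx => ⟨hx.2, hx.1⟩
  have hbdd : BddAbove S := ⟨z, fun _ hx => hx.1⟩
  have hmem : sSup S ∈ S := (isClosed_Iic.inter (isClosed_Ici.preimage hq)).csSup_mem hne hbdd
  refine ⟨sSup S, hmem.1.lt_of_ne fun h => (h ▸ hmem.2 : c ≤ q z).not_gt hz, hmem.2,
    fun x hx => ?_⟩
  by_contra! hcx
  exact (le_csSup hbdd ⟨hx.2, hcx⟩).not_gt hx.1

theorem exists_Ioo_forall_lt {q : ℝ → ℝ} (hq : Continuous q) {c z : ℝ} (hz : q z < c)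
    (hbot : ∀ᶠ x in atBot, c ≤ q x) (htop : ∀ᶠ x in atTop, c ≤ q x) :
    ∃ A B, z ∈ Ioo A B ∧ c ≤ q A ∧ c ≤ q B ∧ ∀ x ∈ Ioo A B, q x < c := by
  obtain ⟨A, hAz, hA, hleft⟩ := exists_lt_forall_Ioc_lt hq hz hbot
  obtain ⟨B', hBz, hB, hright⟩ := exists_lt_forall_Ioc_lt (q := fun x => q (-x))
    (hq.comp continuous_neg) (z := -z) (by simpa using hz)
    (tendsto_neg_atBot_atTop.eventually htop)
  refine ⟨A, -B', ⟨hAz, by linarith⟩, hA, hB, fun x hx => ?_⟩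
  rcases le_total x z with hxz | hzx
  · exact hleft x ⟨hx.1, hxz⟩
  · simpa using hright (-x) ⟨by linarith [hx.2], by linarith⟩

theorem Continuous.exists_forall_ge_of_tendsto_zero {f : ℝ → ℝ} (hf : Continuous f) {x₀ : ℝ}
    (hx₀ : 0 < f x₀) (hbot : Tendsto f atBot (𝓝 0)) (htop : Tendsto f atTop (𝓝 0)) :
    ∃ m, ∀ x, f x ≤ f m :=
  hf.exists_forall_ge' x₀ <| by
    rw [cocompact_eq_atBot_atTop]
    exact ((hbot.sup htop).eventually (eventually_le_nhds hx₀))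

theorem div_mul_le_sum_of_driftDiffusion_neg {ι : Type*} [Fintype ι] {θ a b μ Lb Lt : ℝ}
    {d α : ι → ℝ} {v : ι → ℝ → ℝ} (hθ : 0 ≤ θ) (ha : 0 < a) (hab : a ≤ b)
    (hd : ∀ i, a ≤ d i ∧ d i ≤ b) (hα : ∀ i, 0 ≤ α i) (hv : ∀ i, ContDiff ℝ 2 (v i))
    (hv0 : ∀ i x, 0 ≤ v i x)
    (hsuper : ∀ x, ∑ i, α i * v i x < μ → ∀ i, driftDiffusion (d i) θ (v i) x < 0)
    (hbot : Tendsto (fun x => ∑ i, α i * v i x) atBot (𝓝 Lb)) (hLb : μ ≤ Lb)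
    (htop : Tendsto (fun x => ∑ i, α i * v i x) atTop (𝓝 Lt)) (hLt : μ ≤ Lt) (z : ℝ) :
    a / b * μ ≤ ∑ i, α i * v i z := by
  set q : ℝ → ℝ := fun x => ∑ i, α i * v i x
  have hb : 0 < b := ha.trans_le hab
  by_contra! hz
  have hqz : 0 ≤ q z := Finset.sum_nonneg fun i _ => mul_nonneg (hα i) (hv0 i z)
  have hzμ : b / a * q z < μ := by
    rw [div_mul_eq_mul_div, div_lt_iff₀ ha]
    rw [div_mul_eq_mul_div, lt_div_iff₀ hb] at hz
    linarith
  obtain ⟨c, hzc, hcμ⟩ := exists_between hzμ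
  have hqzc : q z < c := by
    have : q z ≤ b / a * q z := le_mul_of_one_le_left hqz ((one_le_div ha).2 hab)
    linarith
  have hq : Continuous q :=
    continuous_finsetSum _ fun i _ => continuous_const.mul (hv i).continuous
  obtain ⟨A, B, hzAB, hA, hB, hlt⟩ := exists_Ioo_forall_lt hq hqzc
    (hbot.eventually (eventually_ge_nhds (hcμ.trans_le hLb)))
    (htop.eventually (eventually_ge_nhds (hcμ.trans_le hLt)))
  obtain ⟨p, r, hp, hr, hpr, hbound⟩ :=
    exists_weights_le_of_driftDiffusion_neg hθ ha hab (hzAB.1.trans hzAB.2)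
      (Ioo_subset_Icc_self hzAB)
  have hpqr : p * q A + r * q B ≤ q z := by
    simp only [q, Finset.mul_sum, ← Finset.sum_add_distrib]
    refine Finset.sum_le_sum fun i _ => ?_
    have := hbound (d i) (v i) (hd i).1 (hd i).2 (hv i) (hv0 i A) (hv0 i B)
      fun x hx => hsuper x ((hlt x hx).trans hcμ) i
    nlinarith [hα i]
  have : a / b * c ≤ q z := calc
    a / b * c ≤ (p + r) * c := by gcongr; linarith
    _ ≤ p * q A + r * q B := by nlinarith
    _ ≤ q z := hpqr
  rw [div_mul_eq_mul_div, div_le_iff₀ hb] at this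
  rw [div_mul_eq_mul_div, div_lt_iff₀ ha] at hzc
  linarith

section LotkaVolterra

variable {n : ℕ} {d σ : Fin (n + 1) → ℝ} {c : Fin (n + 1) → Fin (n + 1) → ℝ}

-- `σ̃ i` of the paper: the growth rate of resident `i` when the invader (the last species)
-- sits at its carrying capacity `σ_last / c_last,last`.
def invadedRate (σ : Fin (n + 1) → ℝ) (c : Fin (n + 1) → Fin (n + 1) → ℝ) (i : Fin n) : ℝ :=
  σ i.castSucc - c i.castSucc (Fin.last n) * σ (Fin.last n) / c (Fin.last n) (Fin.last n)

-- The first factor in [H2]: `minᵢ α*ᵢ · minⱼ σ̃ⱼ / cⱼᵢ` with `α*ᵢ = c_last,i`.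
def invasionThreshold [NeZero n] (σ : Fin (n + 1) → ℝ) (c : Fin (n + 1) → Fin (n + 1) → ℝ) :
    ℝ :=
  Finset.univ.inf' Finset.univ_nonempty fun i : Fin n => c (Fin.last n) i.castSucc *
    Finset.univ.inf' Finset.univ_nonempty fun j : Fin n =>
      invadedRate σ c j / c j.castSucc i.castSucc

theorem invasionThreshold_le [NeZero n] (hc : ∀ i j, 0 < c i j) (i j : Fin n) :
    invasionThreshold σ c ≤
      c (Fin.last n) i.castSucc * (invadedRate σ c j / c j.castSucc i.castSucc) :=
  (Finset.inf'_le _ (Finset.mem_univ i)).trans <|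
    mul_le_mul_of_nonneg_left (Finset.inf'_le _ (Finset.mem_univ j)) (hc _ _).le

theorem invasionThreshold_le_resident [NeZero n] (hσ : 0 ≤ σ (Fin.last n))
    (hc : ∀ i j, 0 < c i j) (i : Fin n) :
    invasionThreshold σ c ≤
      c (Fin.last n) i.castSucc * (σ i.castSucc / c i.castSucc i.castSucc) := by
  refine (invasionThreshold_le hc i i).trans ?_
  have := hc i.castSucc (Fin.last n)
  have := hc (Fin.last n) (Fin.last n)
  gcongr
  · exact (hc _ _).le
  · exact (hc _ _).le
  · exact sub_le_self _ (by positivity)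

theorem sum_competition_lt [NeZero n] {u : Fin (n + 1) → ℝ} (hc : ∀ i j, 0 < c i j)
    (hu : ∀ i, 0 < u i)
    (hlast : c (Fin.last n) (Fin.last n) * u (Fin.last n) ≤ σ (Fin.last n))
    (hq : ∑ j : Fin n, c (Fin.last n) j.castSucc * u j.castSucc < invasionThreshold σ c)
    (i : Fin n) : ∑ j, c i.castSucc j * u j < σ i.castSucc := by
  set μ := invasionThreshold σ c
  set q := ∑ j : Fin n, c (Fin.last n) j.castSucc * u j.castSucc
  set S := ∑ j : Fin n, c i.castSucc j.castSucc * u j.castSucc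
  have hS : μ * S ≤ invadedRate σ c i * q := by
    simp only [S, q, Finset.mul_sum]
    refine Finset.sum_le_sum fun j _ => ?_
    have h := invasionThreshold_le (σ := σ) hc j i
    rw [mul_div_assoc', le_div_iff₀ (hc _ _)] at h
    nlinarith [hu j.castSucc]
  have hS0 : 0 < S := Finset.sum_pos (fun j _ => mul_pos (hc _ _) (hu _)) Finset.univ_nonempty
  have hq0 : 0 ≤ q := Finset.sum_nonneg fun j _ => (mul_pos (hc _ _) (hu _)).le
  have hSrate : S < invadedRate σ c i := by nlinarith
  have hlast' : c i.castSucc (Fin.last n) * u (Fin.last n) ≤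
      c i.castSucc (Fin.last n) * σ (Fin.last n) / c (Fin.last n) (Fin.last n) := by
    rw [mul_div_assoc]
    exact mul_le_mul_of_nonneg_left ((le_div_iff₀' (hc _ _)).2 hlast) (hc _ _).le
  rw [Fin.sum_univ_castSucc]
  simp only [invadedRate] at hSrate
  linarith

theorem not_travelingWave_of_nonneg_speed [NeZero n] {θ a b Lb Lt : ℝ}
    {u : Fin (n + 1) → ℝ → ℝ} (hθ : 0 ≤ θ) (hc : ∀ i j, 0 < c i j)
    (ha : 0 < a) (hd : ∀ i, a ≤ d i ∧ d i ≤ b)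
    (hthreshold : σ (Fin.last n) ≤ invasionThreshold σ c * (a / b))
    (hu : ∀ i, ContDiff ℝ 2 (u i)) (hpos : ∀ i x, 0 < u i x)
    (hode : ∀ i x, driftDiffusion (d i) θ (u i) x + u i x * (σ i - ∑ j, c i j * u j x) = 0)
    (hbot : Tendsto (u (Fin.last n)) atBot (𝓝 0))
    (htop : Tendsto (u (Fin.last n)) atTop (𝓝 0))
    (hqbot : Tendsto (fun x => ∑ i : Fin n, c (Fin.last n) i.castSucc * u i.castSucc x) atBot
      (𝓝 Lb)) (hLb : invasionThreshold σ c ≤ Lb)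
    (hqtop : Tendsto (fun x => ∑ i : Fin n, c (Fin.last n) i.castSucc * u i.castSucc x) atTop
      (𝓝 Lt)) (hLt : invasionThreshold σ c ≤ Lt) : False := by
  set l := Fin.last n
  have hab : a ≤ b := (hd 0).1.trans (hd 0).2
  obtain ⟨m, hm⟩ := (hu l).continuous.exists_forall_ge_of_tendsto_zero (hpos l 0) hbot htop
  have hmax : IsLocalMax (u l) m := Eventually.of_forall hm
  have hsum : ∑ j, c l j * u j m ≤ σ l := by
    have hodem := hode l m
    rw [driftDiffusion, hmax.deriv_eq_zero] at hodem
    have hdiff : d l * deriv (deriv (u l)) m ≤ 0 := mul_nonpos_of_nonneg_of_nonpos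
      (ha.le.trans (hd l).1) (hmax.deriv_deriv_nonpos (hu l).continuous.continuousAt)
    have hreact : 0 ≤ u l m * (σ l - ∑ j, c l j * u j m) := by linarith
    linarith [(mul_nonneg_iff_of_pos_left (hpos l m)).1 hreact]
  have hlast (x : ℝ) : c l l * u l x ≤ σ l := calc
    c l l * u l x ≤ c l l * u l m := mul_le_mul_of_nonneg_left (hm x) (hc l l).le
    _ ≤ ∑ j, c l j * u j m := Finset.single_le_sum (f := fun j => c l j * u j m)
      (fun j _ => (mul_pos (hc l j) (hpos j m)).le) (Finset.mem_univ l)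
    _ ≤ σ l := hsum
  have hsuper (x : ℝ)
      (hx : ∑ i : Fin n, c l i.castSucc * u i.castSucc x < invasionThreshold σ c) (i : Fin n) :
      driftDiffusion (d i.castSucc) θ (u i.castSucc) x < 0 := by
    have := sum_competition_lt hc (fun j => hpos j x) (hlast x) hx i
    linarith [hode i.castSucc x, mul_pos (hpos i.castSucc x) (sub_pos.2 this)]
  have hq := div_mul_le_sum_of_driftDiffusion_neg (ι := Fin n) hθ ha hab
    (fun i => hd i.castSucc) (fun i => (hc l i.castSucc).le) (fun i => hu i.castSucc)
    (fun i x => (hpos i.castSucc x).le) hsuper hqbot hLb hqtop hLt m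
  rw [Fin.sum_univ_castSucc] at hsum
  linarith [mul_pos (hc l l) (hpos l m)]

end LotkaVolterra

end

theorem nonexistence_lv4_general (d σ : Fin 4 → ℝ) (c : Fin 4 → Fin 4 → ℝ) (θ : ℝ)
    (hd : ∀ i, 0 < d i) (hσ : ∀ i, 0 < σ i) (hc : ∀ i j, 0 < c i j)
    (hH2 : σ 3 ≤
      (Finset.univ.inf' Finset.univ_nonempty
          (fun i : Fin 3 => c 3 i.castSucc *
            Finset.univ.inf' Finset.univ_nonempty
              (fun j : Fin 3 =>
                (σ j.castSucc - c j.castSucc 3 * σ 3 / c 3 3) / c j.castSucc i.castSucc)))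
        * ((Finset.univ.inf' Finset.univ_nonempty d)
          / (Finset.univ.sup' Finset.univ_nonempty d))) :
    ¬ ∃ u : Fin 4 → ℝ → ℝ,
      (∀ i, ContDiff ℝ 2 (u i)) ∧
      (∀ i x, 0 < u i x) ∧
      (∀ i x, d i * deriv (deriv (u i)) x + θ * deriv (u i) x
          + u i x * (σ i - ∑ j, c i j * u j x) = 0) ∧
      Tendsto (u 0) atBot (nhds (σ 0 / c 0 0)) ∧
      Tendsto (u 1) atBot (nhds 0) ∧
      Tendsto (u 2) atBot (nhds 0) ∧
      Tendsto (u 3) atBot (nhds 0) ∧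
      Tendsto (u 0) atTop (nhds 0) ∧
      Tendsto (u 1) atTop (nhds (σ 1 / c 1 1)) ∧
      Tendsto (u 2) atTop (nhds 0) ∧
      Tendsto (u 3) atTop (nhds 0) := by
  rintro ⟨u, hu, hpos, hode, h0b, h1b, h2b, h3b, h0t, h1t, h2t, h3t⟩
  have hbounds (i : Fin 4) : Finset.univ.inf' Finset.univ_nonempty d ≤ d i ∧
      d i ≤ Finset.univ.sup' Finset.univ_nonempty d :=
    ⟨Finset.inf'_le _ (Finset.mem_univ i), Finset.le_sup' _ (Finset.mem_univ i)⟩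
  have ha : 0 < Finset.univ.inf' Finset.univ_nonempty d :=
    (Finset.lt_inf'_iff _).2 fun i _ => hd i
  have hq : (fun x => ∑ i : Fin 3, c 3 i.castSucc * u i.castSucc x) =
      fun x => c 3 0 * u 0 x + c 3 1 * u 1 x + c 3 2 * u 2 x := by
    simp [Fin.sum_univ_three]
  have hqbot : Tendsto (fun x => ∑ i : Fin 3, c 3 i.castSucc * u i.castSucc x) atBot
      (𝓝 (c 3 0 * (σ 0 / c 0 0))) := by
    rw [hq]
    simpa using ((h0b.const_mul _).add (h1b.const_mul _)).add (h2b.const_mul (c 3 2))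
  have hqtop : Tendsto (fun x => ∑ i : Fin 3, c 3 i.castSucc * u i.castSucc x) atTop
      (𝓝 (c 3 1 * (σ 1 / c 1 1))) := by
    rw [hq]
    simpa using ((h0t.const_mul _).add (h1t.const_mul _)).add (h2t.const_mul (c 3 2))
  have hres := invasionThreshold_le_resident (hσ 3).le hc
  rcases le_total 0 θ with hθ | hθ
  · exact not_travelingWave_of_nonneg_speed hθ hc ha hbounds hH2 hu hpos hode h3b h3t
      hqbot (hres 0) hqtop (hres 1)
  · exact not_travelingWave_of_nonneg_speed (u := fun i x => u i (-x)) (neg_nonneg.2 hθ) hc ha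
      hbounds hH2 (fun i => (hu i).comp contDiff_neg) (fun i x => hpos i (-x))
      (fun i x => by rw [driftDiffusion_comp_neg]; exact hode i (-x))
      (h3t.comp tendsto_neg_atBot_atTop) (h3b.comp tendsto_neg_atTop_atBot)
      (hqtop.comp tendsto_neg_atBot_atTop) (hres 1) (hqbot.comp tendsto_neg_atTop_atBot) (hres 0)

/-- Nonexistence of traveling waves for the Lotka-Volterra system of four
competing species. -/
theorem nonexistence_lv4 (d σ : Fin 4 → ℝ) (c : Fin 4 → Fin 4 → ℝ) (θ : ℝ)
    (hd : ∀ i, 0 < d i) (hσ : ∀ i, 0 < σ i) (hc : ∀ i j, 0 < c i j)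
    (hH1 : ∀ i : Fin 3, 0 < σ i.castSucc - c i.castSucc 3 * σ 3 / c 3 3)
    (hH2 : σ 3 ≤
      (Finset.univ.inf' Finset.univ_nonempty
          (fun i : Fin 3 => c 3 i.castSucc *
            Finset.univ.inf' Finset.univ_nonempty
              (fun j : Fin 3 =>
                (σ j.castSucc - c j.castSucc 3 * σ 3 / c 3 3) / c j.castSucc i.castSucc)))
        * ((Finset.univ.inf' Finset.univ_nonempty d)
          / (Finset.univ.sup' Finset.univ_nonempty d))) :
    ¬ ∃ u : Fin 4 → ℝ → ℝ,
      (∀ i, ContDiff ℝ 2 (u i)) ∧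
      (∀ i x, 0 < u i x) ∧
      (∀ i x, d i * deriv (deriv (u i)) x + θ * deriv (u i) x
          + u i x * (σ i - ∑ j, c i j * u j x) = 0) ∧
      Tendsto (u 0) atBot (nhds (σ 0 / c 0 0)) ∧
      Tendsto (u 1) atBot (nhds 0) ∧
      Tendsto (u 2) atBot (nhds 0) ∧
      Tendsto (u 3) atBot (nhds 0) ∧
      Tendsto (u 0) atTop (nhds 0) ∧
      Tendsto (u 1) atTop (nhds (σ 1 / c 1 1)) ∧
      Tendsto (u 2) atTop (nhds 0) ∧
      Tendsto (u 3) atTop (nhds 0) :=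
  nonexistence_lv4_general d σ c θ hd hσ hc hH2
end

section
/- Let n ≥ 1, α_i > 0, d_i > 0, u̲_i > 0 for i = 1,…,n. Define λ_2 = min_i(α_i d_i u̲_i), η = λ_2 / max_i d_i, and λ_1 = η · min_i d_i. Define P_η = {u ∈ [0,∞)^n : Σ α_i u_i ≤ η}, Q_λ = {u ∈ [0,∞)^n : Σ α_i d_i u_i ≤ λ}, and R̲ = {u ∈ [0,∞)^n : Σ u_i/u̲_i ≤ 1}. Then the inclusions Q_{λ_1} ⊆ P_η ⊆ Q_{λ_2} ⊆ R̲ hold. -/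
/-!
Each inclusion compares two linear functionals on the nonnegative orthant coefficientwise:
`min d · Σ αᵢvᵢ ≤ Σ αᵢdᵢvᵢ ≤ max d · Σ αᵢvᵢ`, and `λ₂ · Σ vᵢ/u̲ᵢ ≤ Σ αᵢdᵢvᵢ` because
`λ₂ ≤ αᵢdᵢu̲ᵢ` for every `i`. The levels `η = λ₂ / max d` and `λ₁ = η · min d` are chosen
exactly so that these comparisons carry each bound to the next.
-/

open Finset

theorem mul_sum_le_sum_mul {ι : Type*} {s : Finset ι} {b w : ι → ℝ} {c : ℝ}
    (hw : ∀ i ∈ s, 0 ≤ w i) (hb : ∀ i ∈ s, c ≤ b i) :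
    c * ∑ i ∈ s, w i ≤ ∑ i ∈ s, b i * w i := by
  rw [mul_sum]
  exact sum_le_sum fun i hi => mul_le_mul_of_nonneg_right (hb i hi) (hw i hi)

section WeightedSimplex

variable {ι : Type*} [Fintype ι]

-- The paper's `P_η` is `weightedSimplex α η` and its `Q_λ` is `weightedSimplex (α * d) λ`.
def weightedSimplex (a : ι → ℝ) (t : ℝ) : Set (ι → ℝ) :=
  {v | (∀ j, 0 ≤ v j) ∧ ∑ i, a i * v i ≤ t}

theorem weightedSimplex_subset_of_mul_le {a b : ι → ℝ} {c t t' : ℝ} (hc : 0 < c)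
    (hab : ∀ i, c * a i ≤ b i) (ht : t' ≤ c * t) :
    weightedSimplex b t' ⊆ weightedSimplex a t := by
  rintro v ⟨hv, hsum⟩
  refine ⟨hv, le_of_mul_le_mul_left ?_ hc⟩
  calc c * ∑ i, a i * v i
      = ∑ i, c * (a i * v i) := mul_sum _ _ _
    _ ≤ ∑ i, b i * v i := sum_le_sum fun i _ => by
        rw [← mul_assoc]; exact mul_le_mul_of_nonneg_right (hab i) (hv i)
    _ ≤ c * t := hsum.trans ht

theorem weightedSimplex_subset_of_le_mul {a b : ι → ℝ} {c t t' : ℝ} (hc : 0 ≤ c)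
    (hab : ∀ i, b i ≤ c * a i) (ht : c * t ≤ t') :
    weightedSimplex a t ⊆ weightedSimplex b t' := by
  rintro v ⟨hv, hsum⟩
  refine ⟨hv, ?_⟩
  calc ∑ i, b i * v i
      ≤ ∑ i, c * (a i * v i) := sum_le_sum fun i _ => by
        rw [← mul_assoc]; exact mul_le_mul_of_nonneg_right (hab i) (hv i)
    _ = c * ∑ i, a i * v i := (mul_sum _ _ _).symm
    _ ≤ c * t := mul_le_mul_of_nonneg_left hsum hc
    _ ≤ t' := ht

theorem weightedSimplex_subset_sum_div_le_one {b u : ι → ℝ} {t : ℝ} (ht : 0 < t)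
    (hu : ∀ i, 0 < u i) (hbu : ∀ i, t ≤ b i * u i) :
    weightedSimplex b t ⊆ {v | (∀ j, 0 ≤ v j) ∧ ∑ i, v i / u i ≤ 1} := by
  rintro v ⟨hv, hsum⟩
  refine ⟨hv, le_of_mul_le_mul_left ?_ ht⟩
  calc t * ∑ i, v i / u i
      ≤ ∑ i, b i * u i * (v i / u i) :=
        mul_sum_le_sum_mul (fun i _ => div_nonneg (hv i) (hu i).le) fun i _ => hbu i
    _ = ∑ i, b i * v i := sum_congr rfl fun i _ => by field_simp [(hu i).ne']
    _ ≤ t * 1 := by rwa [mul_one]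

end WeightedSimplex

/-- The N-barrier construction for the lower bound in the NBMP: the nested
inclusions `Q_{lam1} ⊆ P_η ⊆ Q_{lam2} ⊆ R̲`. -/
theorem nbarrier_lower (n : ℕ) (α d ulow : Fin (n + 1) → ℝ)
    (hα : ∀ i, 0 < α i) (hd : ∀ i, 0 < d i) (hu : ∀ i, 0 < ulow i) :
    let lam2 : ℝ := Finset.univ.inf' Finset.univ_nonempty (fun i => α i * d i * ulow i)
    let η : ℝ := lam2 / Finset.univ.sup' Finset.univ_nonempty d
    let lam1 : ℝ := η * Finset.univ.inf' Finset.univ_nonempty d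
    ({v : Fin (n + 1) → ℝ | (∀ j, 0 ≤ v j) ∧ (∑ i, α i * d i * v i) ≤ lam1} ⊆
      {v : Fin (n + 1) → ℝ | (∀ j, 0 ≤ v j) ∧ (∑ i, α i * v i) ≤ η}) ∧
    ({v : Fin (n + 1) → ℝ | (∀ j, 0 ≤ v j) ∧ (∑ i, α i * v i) ≤ η} ⊆
      {v : Fin (n + 1) → ℝ | (∀ j, 0 ≤ v j) ∧ (∑ i, α i * d i * v i) ≤ lam2}) ∧
    ({v : Fin (n + 1) → ℝ | (∀ j, 0 ≤ v j) ∧ (∑ i, α i * d i * v i) ≤ lam2} ⊆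
      {v : Fin (n + 1) → ℝ | (∀ j, 0 ≤ v j) ∧ (∑ i, v i / ulow i) ≤ 1}) := by
  intro lam2 η lam1
  have hdmin : 0 < univ.inf' univ_nonempty d := (lt_inf'_iff _).2 fun i _ => hd i
  have hdmax : 0 < univ.sup' univ_nonempty d := (lt_sup'_iff _).2 ⟨0, mem_univ _, hd 0⟩
  have hlam2 : 0 < lam2 :=
    (lt_inf'_iff _).2 fun i _ => mul_pos (mul_pos (hα i) (hd i)) (hu i)
  refine ⟨weightedSimplex_subset_of_mul_le (a := α) hdmin (fun i => ?_) (mul_comm _ _).le,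
    weightedSimplex_subset_of_le_mul (a := α) hdmax.le (fun i => ?_)
      (mul_div_cancel₀ _ hdmax.ne').le,
    weightedSimplex_subset_sum_div_le_one (b := fun i => α i * d i) hlam2 hu
      fun i => inf'_le _ (mem_univ i)⟩
  · rw [mul_comm (α i)]; exact mul_le_mul_of_nonneg_right (inf'_le _ (mem_univ i)) (hα i).le
  · rw [mul_comm (α i)]; exact mul_le_mul_of_nonneg_right (le_sup' _ (mem_univ i)) (hα i).le
end

section
/- Let α, β, k, d > 0 and a_1 > 1, a_2 > 1, and define H(u,v) = α u(1 − u − a_1 v) + β k v(1 − a_2 u − v). If −α/(dβ) ≤ (−α(a_1−1) − βk a_2)/(βk), then every (u,v) with u ≥ 0, v ≥ 0 and α u + dβ v ≤ dβ satisfies H(u,v) ≥ 0. -/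
/-- Case (i) of the improved tangent line method: if the line through `(0,1)`
with slope `-α/(dβ)` is at most as steep as the tangent to `H = 0` at `(0,1)`,
then the region below that line lies in `{H ≥ 0}`. -/
theorem improved_tangent_case_i (α β k d a₁ a₂ : ℝ)
    (hα : 0 < α) (hβ : 0 < β) (hk : 0 < k) (hd : 0 < d) (ha₁ : 1 < a₁) (ha₂ : 1 < a₂)
    (hslope : -α / (d * β) ≤ (-(α * (a₁ - 1)) - β * k * a₂) / (β * k)) :
    ∀ u v : ℝ, 0 ≤ u → 0 ≤ v → α * u + d * β * v ≤ d * β →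
      0 ≤ α * u * (1 - u - a₁ * v) + β * k * v * (1 - a₂ * u - v) := by
  have hdβ : 0 < d * β := mul_pos hd hβ
  have hβk : 0 < β * k := mul_pos hβ hk
  have hA : d * β * (α * (a₁ - 1) + β * k * a₂) ≤ α * (β * k) := by
    rw [div_le_div_iff₀ hdβ hβk] at hslope
    nlinarith [hslope]
  have hcα : d * β ≤ α := by
    nlinarith [mul_nonneg hdβ.le (mul_nonneg hα.le (sub_pos.2 ha₁).le),
      mul_le_mul_of_nonneg_left ha₂.le (mul_pos hdβ hβk).le]
  intro u v hu hv hline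
  have hv1 : v ≤ 1 := by nlinarith
  have huv : 0 ≤ 1 - u - v := by
    nlinarith [mul_nonneg (sub_nonneg.2 hcα) (sub_nonneg.2 hv1)]
  -- key: dβ(1−u−v) ≥ u(α−dβ) from the line constraint
  have hkey : u * (α - d * β) ≤ d * β * (1 - u - v) := by nlinarith
  nlinarith [mul_nonneg hu hv, mul_nonneg (mul_nonneg hu hv) hdβ.le,
    mul_le_mul_of_nonneg_left hkey (mul_nonneg hβk.le hv),
    mul_le_mul_of_nonneg_right hA (mul_nonneg hu hv),
    mul_nonneg (mul_nonneg hu huv) hdβ.le, mul_nonneg (mul_nonneg hα.le hu) huv]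
end

section
/- Let α, β, k, d > 0 and a_1 > 1, a_2 > 1, and define H(u,v) = α u(1 − u − a_1 v) + β k v(1 − a_2 u − v). If −α/(dβ) ≥ −α/(α a_1 + βk(a_2−1)), then every (u,v) with u ≥ 0, v ≥ 0 and α u + dβ v ≤ α satisfies H(u,v) ≥ 0. -/
/-- Case (ii) of the improved tangent line method: if the line through `(1,0)`
with slope `-α/(dβ)` is at least as steep as the tangent to `H = 0` at `(1,0)`,
then the region below that line lies in `{H ≥ 0}`. -/
theorem improved_tangent_case_ii (α β k d a₁ a₂ : ℝ)
    (hα : 0 < α) (hβ : 0 < β) (hk : 0 < k) (hd : 0 < d) (ha₁ : 1 < a₁) (ha₂ : 1 < a₂)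
    (hslope : -α / (α * a₁ + β * k * (a₂ - 1)) ≤ -α / (d * β)) :
    ∀ u v : ℝ, 0 ≤ u → 0 ≤ v → α * u + d * β * v ≤ α →
      0 ≤ α * u * (1 - u - a₁ * v) + β * k * v * (1 - a₂ * u - v) := by
  intro u v hu hv hline
  have hS : 0 < α * a₁ + β * k * (a₂ - 1) := by
    nlinarith [mul_lt_mul_of_pos_left ha₁ hα, mul_pos (mul_pos hβ hk) (sub_pos.2 ha₂)]
  have hdβ : 0 < d * β := by positivity
  rw [div_le_div_iff₀ hS hdβ] at hslope
  have hSd : α * a₁ + β * k * (a₂ - 1) ≤ d * β := by nlinarith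
  -- dβ ≥ S > α, so u + v ≤ 1
  have hαdβ : α < d * β := by
    nlinarith [mul_lt_mul_of_pos_left ha₁ hα, mul_pos (mul_pos hβ hk) (sub_pos.2 ha₂)]
  have huv : u + v ≤ 1 := by nlinarith [mul_nonneg hv (sub_nonneg.2 hαdβ.le)]
  -- 1 - u - a₁ v ≥ (βk(a₂-1)/α) v
  have key : α * (1 - u - a₁ * v) ≥ β * k * (a₂ - 1) * v := by nlinarith
  nlinarith [mul_nonneg hu hv, mul_nonneg hv (sub_nonneg.2 huv),
    mul_le_mul_of_nonneg_left key.le hu, mul_nonneg (mul_nonneg hβ.le hk.le) hv]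
end
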